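/- For any z, w in the open unit disk, sup over f analytic with |f| ≤ 1 on D of |f(z) - f(w)| equals (2 - 2√(1 - ρ(z,w)^2))/ρ(z,w) when z ≠ w, and this quantity is at most 2 ρ(z,w). -/

import Mathlib

/-!
Schwarz–Pick says that every `f` in the unit ball of `H∞` contracts the pseudo-hyperbolic
distance: `|f z - f w| ≤ ρ |1 - conj (f w) f z|`. Together with the identity
`|1 - b̄ a|² = |a - b|² + (1 - |a|²)(1 - |b|²)` and AM-GM this gives
`d ≤ ρ (1 + d² / 4)` for `d = |f z - f w| ≤ 2`, hence `d ≤ 2ρ` and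
`d ≤ (2 - 2√(1 - ρ²)) / ρ`. Equality is attained by a disc automorphism sending `w` and `z`
to the symmetric points `∓τ` with `|τ| = (1 - √(1 - ρ²)) / ρ`.
-/

open Complex Metric Set Function ComplexConjugate

/-- `‖mobius w z‖` is the pseudo-hyperbolic distance `ρ(z, w)`. -/
noncomputable def mobius (a ζ : ℂ) : ℂ := (ζ - a) / (1 - conj a * ζ)

theorem mobius_self (a : ℂ) : mobius a a = 0 := by simp [mobius]

theorem mobius_zero (a : ℂ) : mobius a 0 = -a := by simp [mobius]

theorem norm_one_sub_conj_mul_sq (a b : ℂ) :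
    ‖1 - conj b * a‖ ^ 2 = ‖a - b‖ ^ 2 + (1 - ‖a‖ ^ 2) * (1 - ‖b‖ ^ 2) := by
  simp only [← Complex.normSq_eq_norm_sq, Complex.normSq_apply, Complex.sub_re, Complex.sub_im,
    Complex.one_re, Complex.one_im, Complex.mul_re, Complex.mul_im, Complex.conj_re,
    Complex.conj_im]
  ring

theorem one_sub_conj_mul_ne_zero {a b : ℂ} (hb : ‖b‖ < 1) (ha : ‖a‖ ≤ 1) :
    1 - conj b * a ≠ 0 := by
  intro h0
  have : ‖conj b * a‖ = 1 := by rw [← sub_eq_zero.mp h0, norm_one]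
  rw [norm_mul, Complex.norm_conj] at this
  exact (mul_lt_one_of_nonneg_of_lt_one_left (norm_nonneg b) hb ha).ne this

theorem norm_sub_le_norm_one_sub_conj_mul {a b : ℂ} (ha : ‖a‖ ≤ 1) (hb : ‖b‖ ≤ 1) :
    ‖a - b‖ ≤ ‖1 - conj b * a‖ := by
  have := norm_one_sub_conj_mul_sq a b
  have : 0 ≤ (1 - ‖a‖ ^ 2) * (1 - ‖b‖ ^ 2) :=
    mul_nonneg (by nlinarith [norm_nonneg a]) (by nlinarith [norm_nonneg b])
  exact pow_le_pow_iff_left₀ (norm_nonneg _) (norm_nonneg _) two_ne_zero |>.mp (by linarith)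

theorem norm_sub_lt_norm_one_sub_conj_mul {a b : ℂ} (ha : ‖a‖ < 1) (hb : ‖b‖ < 1) :
    ‖a - b‖ < ‖1 - conj b * a‖ := by
  have := norm_one_sub_conj_mul_sq a b
  have : 0 < (1 - ‖a‖ ^ 2) * (1 - ‖b‖ ^ 2) :=
    mul_pos (by nlinarith [norm_nonneg a]) (by nlinarith [norm_nonneg b])
  exact pow_lt_pow_iff_left₀ (norm_nonneg _) (norm_nonneg _) two_ne_zero |>.mp (by linarith)

theorem norm_one_sub_conj_mul_le {a b : ℂ} (ha : ‖a‖ ≤ 1) (hb : ‖b‖ ≤ 1) :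
    ‖1 - conj b * a‖ ≤ 1 + ‖a - b‖ ^ 2 / 4 := by
  have hsq := norm_one_sub_conj_mul_sq a b
  have htri : ‖a - b‖ ≤ ‖a‖ + ‖b‖ := norm_sub_le a b
  have h0 := norm_nonneg (a - b)
  have ha0 := norm_nonneg a
  have hb0 := norm_nonneg b
  -- AM-GM, then `‖a‖² + ‖b‖² ≥ (‖a‖ + ‖b‖)² / 2 ≥ ‖a - b‖² / 2`
  have hprod : (1 - ‖a‖ ^ 2) * (1 - ‖b‖ ^ 2) ≤ (1 - ‖a - b‖ ^ 2 / 4) ^ 2 := by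
    have hA : 0 ≤ 1 - ‖a‖ ^ 2 := by nlinarith
    have hB : 0 ≤ 1 - ‖b‖ ^ 2 := by nlinarith
    have hmean : (2 - ‖a‖ ^ 2 - ‖b‖ ^ 2) / 2 ≤ 1 - ‖a - b‖ ^ 2 / 4 := by
      nlinarith [sq_nonneg (‖a‖ - ‖b‖), mul_self_le_mul_self h0 htri]
    nlinarith [sq_nonneg (‖a‖ ^ 2 - ‖b‖ ^ 2), mul_self_le_mul_self (by linarith) hmean]
  exact pow_le_pow_iff_left₀ (norm_nonneg _) (by positivity) two_ne_zero |>.mp (by nlinarith)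

theorem norm_mobius_le_one {a ζ : ℂ} (ha : ‖a‖ < 1) (hζ : ‖ζ‖ ≤ 1) : ‖mobius a ζ‖ ≤ 1 := by
  have hD := one_sub_conj_mul_ne_zero ha hζ
  rw [mobius, norm_div, div_le_one (norm_pos_iff.mpr hD)]
  exact norm_sub_le_norm_one_sub_conj_mul hζ ha.le

theorem norm_mobius_lt_one {a ζ : ℂ} (ha : ‖a‖ < 1) (hζ : ‖ζ‖ < 1) : ‖mobius a ζ‖ < 1 := by
  have hD := one_sub_conj_mul_ne_zero ha hζ.le
  rw [mobius, norm_div, div_lt_one (norm_pos_iff.mpr hD)]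
  exact norm_sub_lt_norm_one_sub_conj_mul hζ ha

theorem mobius_ne_zero {a ζ : ℂ} (ha : ‖a‖ < 1) (hζ : ‖ζ‖ ≤ 1) (hne : ζ ≠ a) :
    mobius a ζ ≠ 0 :=
  div_ne_zero (sub_ne_zero.mpr hne) (one_sub_conj_mul_ne_zero ha hζ)

theorem mobius_neg_mobius {a ζ : ℂ} (ha : ‖a‖ < 1) (hζ : ‖ζ‖ < 1) :
    mobius (-a) (mobius a ζ) = ζ := by
  have hD := one_sub_conj_mul_ne_zero ha hζ.le
  have ha' := one_sub_conj_mul_ne_zero ha ha.le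
  set D := 1 - conj a * ζ
  have hnum : (ζ - a) / D + a = ζ * (1 - conj a * a) / D := by
    rw [div_add' _ _ _ hD]; ring
  have hden : 1 + conj a * ((ζ - a) / D) = (1 - conj a * a) / D := by
    rw [mul_div_assoc', one_add_div hD]; ring
  simp only [mobius, map_neg, neg_mul, sub_neg_eq_add]
  rw [hnum, hden, div_div_div_cancel_right₀ hD, mul_div_assoc, div_self ha', mul_one]

theorem differentiableOn_mobius {a : ℂ} (ha : ‖a‖ < 1) :
    DifferentiableOn ℂ (mobius a) (closedBall 0 1) :=
  (differentiableOn_id.sub_const a).div ((differentiableOn_id.const_mul _).const_sub 1)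
    fun _ hζ ↦ one_sub_conj_mul_ne_zero ha (mem_closedBall_zero_iff.mp hζ)

theorem mapsTo_mobius {a : ℂ} (ha : ‖a‖ < 1) : MapsTo (mobius a) (ball 0 1) (ball 0 1) :=
  fun _ hζ ↦ mem_ball_zero_iff.mpr (norm_mobius_lt_one ha (mem_ball_zero_iff.mp hζ))

/-- The Schwarz–Pick lemma. -/
theorem norm_mobius_le_of_mapsTo_ball {f : ℂ → ℂ} (hd : DifferentiableOn ℂ f (ball 0 1))
    (hf : MapsTo f (ball 0 1) (closedBall 0 1)) {z w : ℂ} (hz : ‖z‖ < 1) (hw : ‖w‖ < 1) :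
    ‖mobius (f w) (f z)‖ ≤ ‖mobius w z‖ := by
  have hfw := mem_closedBall_zero_iff.mp (hf (mem_ball_zero_iff.mpr hw))
  rcases hfw.lt_or_eq with hfw | hfw
  · -- Conjugate `f` by disc automorphisms to fix `0`, then apply the Schwarz lemma.
    have hF0 : mobius (f w) (f (mobius (-w) 0)) = 0 := by rw [mobius_zero, neg_neg, mobius_self]
    have hFd : DifferentiableOn ℂ (mobius (f w) ∘ f ∘ mobius (-w)) (ball 0 1) :=
      (differentiableOn_mobius hfw).comp (hd.comp
        ((differentiableOn_mobius (by rwa [norm_neg])).mono ball_subset_closedBall)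
        (mapsTo_mobius (by rwa [norm_neg]))) (hf.comp (mapsTo_mobius (by rwa [norm_neg])))
    have hFmaps : MapsTo (mobius (f w) ∘ f ∘ mobius (-w)) (ball 0 1) (closedBall 0 1) :=
      fun ζ hζ ↦ mem_closedBall_zero_iff.mpr (norm_mobius_le_one hfw
        (mem_closedBall_zero_iff.mp (hf (mapsTo_mobius (by rwa [norm_neg]) hζ))))
    simpa [mobius_neg_mobius hw hz] using
      Complex.norm_le_norm_of_mapsTo_ball hFd hFmaps hF0 (norm_mobius_lt_one hw hz)
  · -- `‖f‖` attains its maximum at `w`, so `f` is constant.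
    have hmax : IsMaxOn (norm ∘ f) (ball 0 1) w := fun ζ hζ ↦ by
      simpa [hfw] using mem_closedBall_zero_iff.mp (hf hζ)
    have hconst := Complex.eqOn_of_isPreconnected_of_isMaxOn_norm (convex_ball 0 1).isPreconnected
      isOpen_ball hd (mem_ball_zero_iff.mpr hw) hmax (mem_ball_zero_iff.mpr hz)
    simp [hconst, mobius_self]

theorem norm_sub_le_mul_of_norm_mobius_le {a b : ℂ} {r : ℝ} (ha : ‖a‖ ≤ 1) (hb : ‖b‖ ≤ 1)
    (h : ‖mobius b a‖ ≤ r) : ‖a - b‖ ≤ r * ‖1 - conj b * a‖ := by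
  by_cases hD : 1 - conj b * a = 0
  · simpa [hD] using norm_sub_le_norm_one_sub_conj_mul ha hb
  · rwa [mobius, norm_div, div_le_iff₀ (norm_pos_iff.mpr hD)] at h

theorem norm_sub_le_norm_mobius_mul_of_mapsTo_ball {f : ℂ → ℂ}
    (hd : DifferentiableOn ℂ f (ball 0 1)) (hf : MapsTo f (ball 0 1) (closedBall 0 1)) {z w : ℂ}
    (hz : ‖z‖ < 1) (hw : ‖w‖ < 1) :
    ‖f z - f w‖ ≤ ‖mobius w z‖ * (1 + ‖f z - f w‖ ^ 2 / 4) := by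
  have hfz := mem_closedBall_zero_iff.mp (hf (mem_ball_zero_iff.mpr hz))
  have hfw := mem_closedBall_zero_iff.mp (hf (mem_ball_zero_iff.mpr hw))
  calc ‖f z - f w‖ ≤ ‖mobius w z‖ * ‖1 - conj (f w) * f z‖ :=
        norm_sub_le_mul_of_norm_mobius_le hfz hfw (norm_mobius_le_of_mapsTo_ball hd hf hz hw)
    _ ≤ ‖mobius w z‖ * (1 + ‖f z - f w‖ ^ 2 / 4) := by
        gcongr
        exact norm_one_sub_conj_mul_le hfz hfw

/-- The bound is the smaller root of `r d² - 4 d + 4 r = 0`; the larger one exceeds `2`. -/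
theorem le_two_sub_two_sqrt_div {d r : ℝ} (hd : d ≤ 2) (hr : 0 < r) (hr1 : r ≤ 1)
    (h : d ≤ r * (1 + d ^ 2 / 4)) : d ≤ (2 - 2 * √(1 - r ^ 2)) / r := by
  set s := √(1 - r ^ 2)
  have hs : s ^ 2 = 1 - r ^ 2 := Real.sq_sqrt (by nlinarith)
  have hs0 : 0 ≤ s := Real.sqrt_nonneg _
  have hrd : r * d ≤ 2 := by nlinarith [mul_nonneg hr.le (sub_nonneg.mpr hd)]
  have hprod : 0 ≤ (r * d - 2 + 2 * s) * (r * d - 2 - 2 * s) := by nlinarith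
  rw [le_div_iff₀ hr]
  by_contra! hlt
  have := (mul_nonneg_iff_of_pos_left (by linarith)).mp hprod
  linarith

theorem mobius_mul_eq_self {u : ℂ} {t r : ℝ} (hu : ‖u‖ = 1) (htr : t * r ≠ 1)
    (h : r * (1 + t ^ 2) = 2 * t) : mobius (t * u) (r * u) = t * u := by
  have hu' : conj u * u = 1 := by rw [Complex.conj_mul', hu]; norm_num
  have hD : 1 - conj (t * u) * (r * u) = ((1 - t * r : ℝ) : ℂ) := by
    rw [map_mul, Complex.conj_ofReal]
    push_cast
    linear_combination (-(t : ℂ) * r) * hu'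
  rw [mobius, hD, div_eq_iff (Complex.ofReal_ne_zero.mpr (sub_ne_zero.mpr htr.symm))]
  have hC : (r : ℂ) * (1 + t ^ 2) = 2 * t := by exact_mod_cast h
  push_cast
  linear_combination u * hC

theorem exists_norm_sub_eq {z w : ℂ} (hz : ‖z‖ < 1) (hw : ‖w‖ < 1) (hzw : z ≠ w) :
    ∃ f : ℂ → ℂ, DifferentiableOn ℂ f (ball 0 1) ∧ MapsTo f (ball 0 1) (closedBall 0 1) ∧
      ‖f z - f w‖ = (2 - 2 * √(1 - ‖mobius w z‖ ^ 2)) / ‖mobius w z‖ := by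
  set p := mobius w z
  set r := ‖p‖
  set s := √(1 - r ^ 2)
  have hr0 : 0 < r := norm_pos_iff.mpr (mobius_ne_zero hw hz.le hzw)
  have hr1 : r < 1 := norm_mobius_lt_one hw hz
  have hs : s ^ 2 = 1 - r ^ 2 := Real.sq_sqrt (by nlinarith)
  have hs1 : 1 - r < s := by nlinarith [Real.sqrt_nonneg (1 - r ^ 2)]
  -- Since `r (1 + t²) = 2 t`, the map `mobius τ ∘ mobius w` sends `w ↦ -τ` and `z ↦ τ`.
  set t := (1 - s) / r
  set τ : ℂ := t * (p / r)
  have ht0 : 0 ≤ t := div_nonneg (by nlinarith) hr0.le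
  have ht1 : t < 1 := (div_lt_one hr0).mpr (by linarith)
  have hnorm : ‖p / r‖ = 1 := by rw [norm_div, Complex.norm_real, Real.norm_of_nonneg hr0.le,
    div_self hr0.ne']
  have hτ : ‖τ‖ = t := by rw [norm_mul, hnorm, Complex.norm_real, Real.norm_of_nonneg ht0, mul_one]
  have hfz : mobius τ p = τ := by
    have hp : p = r * (p / r) := by rw [mul_div_cancel₀ _ (by exact_mod_cast hr0.ne')]
    conv_lhs => rw [hp]
    refine mobius_mul_eq_self hnorm (by nlinarith) ?_
    simp only [t]
    field_simp
    linear_combination hs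
  refine ⟨mobius τ ∘ mobius w, ?_, ?_, ?_⟩
  · exact ((differentiableOn_mobius (hτ ▸ ht1)).mono ball_subset_closedBall).comp
      ((differentiableOn_mobius hw).mono ball_subset_closedBall) (mapsTo_mobius hw)
  · exact ((mapsTo_mobius (hτ ▸ ht1)).comp (mapsTo_mobius hw)).mono_right ball_subset_closedBall
  · rw [comp_apply, comp_apply, hfz, mobius_self, mobius_zero, sub_neg_eq_add, ← two_mul,
      norm_mul, hτ, Complex.norm_ofNat]
    ring

theorem sup_diff_Hinfty (z w : ℂ) (hz : ‖z‖ < 1) (hw : ‖w‖ < 1) :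
    (z ≠ w →
      sSup {x : ℝ | ∃ f : ℂ → ℂ, DifferentiableOn ℂ f (ball (0 : ℂ) 1) ∧
          (∀ ζ : ℂ, ‖ζ‖ < 1 → ‖f ζ‖ ≤ 1) ∧
          x = ‖f z - f w‖}
        = (2 - 2 * Real.sqrt (1 - ‖(z - w) / (1 - (starRingEnd ℂ) w * z)‖ ^ 2))
            / ‖(z - w) / (1 - (starRingEnd ℂ) w * z)‖) ∧
    sSup {x : ℝ | ∃ f : ℂ → ℂ, DifferentiableOn ℂ f (ball (0 : ℂ) 1) ∧
          (∀ ζ : ℂ, ‖ζ‖ < 1 → ‖f ζ‖ ≤ 1) ∧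
          x = ‖f z - f w‖}
      ≤ 2 * ‖(z - w) / (1 - (starRingEnd ℂ) w * z)‖ := by
  have hmaps {f : ℂ → ℂ} : (∀ ζ : ℂ, ‖ζ‖ < 1 → ‖f ζ‖ ≤ 1) ↔ MapsTo f (ball 0 1) (closedBall 0 1) :=
    by simp [MapsTo]
  change (z ≠ w → sSup _ = (2 - 2 * √(1 - ‖mobius w z‖ ^ 2)) / ‖mobius w z‖) ∧
    sSup _ ≤ 2 * ‖mobius w z‖
  set S := {x : ℝ | ∃ f : ℂ → ℂ, DifferentiableOn ℂ f (ball (0 : ℂ) 1) ∧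
    (∀ ζ : ℂ, ‖ζ‖ < 1 → ‖f ζ‖ ≤ 1) ∧ x = ‖f z - f w‖}
  have hS : ∀ x ∈ S, x ≤ 2 ∧ x ≤ ‖mobius w z‖ * (1 + x ^ 2 / 4) := by
    rintro _ ⟨f, hd, hf, rfl⟩
    refine ⟨(norm_sub_le _ _).trans ?_, norm_sub_le_norm_mobius_mul_of_mapsTo_ball hd
      (hmaps.mp hf) hz hw⟩
    linarith [hf z hz, hf w hw]
  have hS2 : ∀ x ∈ S, x ≤ 2 * ‖mobius w z‖ := fun x hx ↦ by
    nlinarith [hS x hx, norm_nonneg (mobius w z)]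
  refine ⟨fun hzw ↦ IsGreatest.csSup_eq ⟨?_, fun x hx ↦ ?_⟩,
    csSup_le ⟨0, fun _ ↦ 0, differentiableOn_const 0, by simp, by simp⟩ hS2⟩
  · obtain ⟨f, hd, hf, hval⟩ := exists_norm_sub_eq hz hw hzw
    exact ⟨f, hd, hmaps.mpr hf, hval.symm⟩
  · exact le_two_sub_two_sqrt_div (hS x hx).1 (norm_pos_iff.mpr (mobius_ne_zero hw hz.le hzw))
      (norm_mobius_lt_one hw hz).le (hS x hx).2
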